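/- Let B be a Boolean algebra, let g, h : (Fin n → B) → B be join-hemimorphisms in each argument, and let c : Fin n → B. If g x ≤ h x holds for every tuple x : Fin n → B with x i ≤ c i for all i, then for every prime filter F of B and every family G : Fin n → Set B of prime filters of B such that c i ∈ G i for every i and such that g a ∈ F for every tuple a : Fin n → B with a i ∈ G i for all i, it also holds that h a ∈ F for every tuple a : Fin n → B with a i ∈ G i for all i. -/

import Mathlib

/-- A prime filter of a Boolean algebra. -/
def IsPrimeFilter {B : Type*} [BooleanAlgebra B] (F : Set B) : Prop :=
  ⊤ ∈ F ∧ ⊥ ∉ F ∧ (∀ x y : B, x ∈ F → x ≤ y → y ∈ F) ∧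
    (∀ x y : B, x ∈ F → y ∈ F → x ⊓ y ∈ F) ∧
    (∀ x y : B, x ⊔ y ∈ F → x ∈ F ∨ y ∈ F)

/-- A map `(Fin n → B) → B` which is a join-hemimorphism in each argument. -/
def IsJoinHemiN {B : Type*} [BooleanAlgebra B] {n : ℕ} (g : (Fin n → B) → B) : Prop :=
  (∀ (i : Fin n) (x : Fin n → B) (a b : B),
      g (Function.update x i (a ⊔ b)) =
        g (Function.update x i a) ⊔ g (Function.update x i b)) ∧
  (∀ (i : Fin n) (x : Fin n → B), x i = ⊥ → g x = ⊥)

open Function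

theorem monotone_of_monotone_update {ι α β : Type*} [Fintype ι] [DecidableEq ι]
    [Preorder α] [Preorder β] {f : (ι → α) → β}
    (hf : ∀ i x, Monotone fun a => f (update x i a)) : Monotone f := by
  intro x y hxy
  suffices ∀ s : Finset ι, f x ≤ f (s.piecewise y x) by
    simpa only [Finset.piecewise_univ] using this Finset.univ
  intro s
  induction s using Finset.induction_on with
  | empty => rw [Finset.piecewise_empty]
  | insert i s hi ih =>
    calc f x ≤ f (s.piecewise y x) := ih
      _ = f (update (s.piecewise y x) i (x i)) := by
        rw [← Finset.piecewise_eq_of_notMem s y x hi, update_eq_self]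
      _ ≤ f ((insert i s).piecewise y x) := by
        rw [Finset.piecewise_insert]
        exact hf i _ (hxy i)

namespace IsJoinHemiN

variable {B : Type*} [BooleanAlgebra B] {n : ℕ} {h : (Fin n → B) → B}

theorem monotone_update (hh : IsJoinHemiN h) (i : Fin n) (x : Fin n → B) :
    Monotone fun a => h (update x i a) := by
  intro a b hab
  calc h (update x i a) ≤ h (update x i a) ⊔ h (update x i b) := le_sup_left
    _ = h (update x i b) := by rw [← hh.1, sup_eq_right.mpr hab]

theorem monotone (hh : IsJoinHemiN h) : Monotone h :=
  monotone_of_monotone_update hh.monotone_update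

end IsJoinHemiN

namespace IsPrimeFilter

variable {B : Type*} [BooleanAlgebra B] {F : Set B} {x y : B}

theorem mem_of_le (hF : IsPrimeFilter F) (hx : x ∈ F) (hxy : x ≤ y) : y ∈ F :=
  hF.2.2.1 x y hx hxy

theorem inf_mem (hF : IsPrimeFilter F) (hx : x ∈ F) (hy : y ∈ F) : x ⊓ y ∈ F :=
  hF.2.2.2.1 x y hx hy

end IsPrimeFilter

theorem stmt_4_general {B : Type*} [BooleanAlgebra B] {n : ℕ}
    (g h : (Fin n → B) → B) (hh : IsJoinHemiN h)
    (c : Fin n → B)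
    (hax : ∀ x : Fin n → B, (∀ i, x i ≤ c i) → g x ≤ h x)
    (F : Set B) (hF : IsPrimeFilter F)
    (G : Fin n → Set B) (hG : ∀ i, IsPrimeFilter (G i))
    (hcG : ∀ i, c i ∈ G i)
    (hrg : ∀ a : Fin n → B, (∀ i, a i ∈ G i) → g a ∈ F) :
    ∀ a : Fin n → B, (∀ i, a i ∈ G i) → h a ∈ F := by
  intro a ha
  have hg_meet : g (a ⊓ c) ∈ F := hrg _ fun i => (hG i).inf_mem (ha i) (hcG i)
  have hgh_meet : g (a ⊓ c) ≤ h (a ⊓ c) := hax _ fun _ => inf_le_right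
  exact hF.mem_of_le (hF.mem_of_le hg_meet hgh_meet) (hh.monotone inf_le_left)

theorem stmt_4 {B : Type*} [BooleanAlgebra B] {n : ℕ}
    (g h : (Fin n → B) → B) (hg : IsJoinHemiN g) (hh : IsJoinHemiN h)
    (c : Fin n → B)
    (hax : ∀ x : Fin n → B, (∀ i, x i ≤ c i) → g x ≤ h x)
    (F : Set B) (hF : IsPrimeFilter F)
    (G : Fin n → Set B) (hG : ∀ i, IsPrimeFilter (G i))
    (hcG : ∀ i, c i ∈ G i)
    (hrg : ∀ a : Fin n → B, (∀ i, a i ∈ G i) → g a ∈ F) :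
    ∀ a : Fin n → B, (∀ i, a i ∈ G i) → h a ∈ F :=
  stmt_4_general g h hh c hax F hF G hG hcG hrg
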